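/- If f and g are Lorentzian polynomials in ℝ[x_1,...,x_n], then their truncations f_{≤κ} and f_{≥κ} are Lorentzian for any κ ∈ ℕⁿ. -/

import Mathlib

open MvPolynomial

variable {n : ℕ}

/-- A real matrix has at most one positive eigenvalue (counted with multiplicity). -/
def AtMostOnePos {m : ℕ} (A : Matrix (Fin m) (Fin m) ℝ) : Prop :=
  ∀ hA : A.IsHermitian, (Finset.univ.filter fun i => 0 < hA.eigenvalues i).card ≤ 1

/-- The iterated partial derivative `∂^α`. -/
noncomputable def pderivPow (α : Fin n →₀ ℕ) (f : MvPolynomial (Fin n) ℝ) :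
    MvPolynomial (Fin n) ℝ :=
  (List.finRange n).foldr (fun i g => (pderiv i)^[α i] g) f

/-- The (constant) Hessian matrix of a polynomial, representing it as a quadratic form
when it is quadratic. -/
noncomputable def hessian (f : MvPolynomial (Fin n) ℝ) : Matrix (Fin n) (Fin n) ℝ :=
  fun i j => MvPolynomial.coeff 0 (pderiv i (pderiv j f))

/-- M-convexity of a set of multi-indices. -/
def MConvexSupp (C : Set (Fin n →₀ ℕ)) : Prop :=
  ∀ α ∈ C, ∀ β ∈ C, ∀ j : Fin n, β j < α j →
    ∃ k : Fin n, α k < β k ∧ α - Finsupp.single j 1 + Finsupp.single k 1 ∈ C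

/-- `f` is Lorentzian of degree `d`: homogeneous of degree `d` with non-negative
coefficients, and if `d ≥ 2`, its support is M-convex and every `(d−2)`-fold partial
derivative is a quadratic form with at most one positive eigenvalue. -/
def Lorentzian (d : ℕ) (f : MvPolynomial (Fin n) ℝ) : Prop :=
  f.IsHomogeneous d ∧ (∀ α, 0 ≤ f.coeff α) ∧
  (2 ≤ d → MConvexSupp {α | f.coeff α ≠ 0} ∧
    ∀ α : Fin n →₀ ℕ, (α.sum fun _ k => k) = d - 2 →
      AtMostOnePos (hessian (pderivPow α f)))

/-- `f` is Lorentzian (of some degree). -/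
def IsLorentzian (f : MvPolynomial (Fin n) ℝ) : Prop := ∃ d, Lorentzian d f

/-- The constant-coefficient differential operator `s(∂_{x_1},…,∂_{x_n})`. -/
noncomputable def diffOp (s f : MvPolynomial (Fin n) ℝ) : MvPolynomial (Fin n) ℝ :=
  ∑ α ∈ s.support, s.coeff α • pderivPow α f

/-- Lower truncation `f_{≤κ} = Σ_{α ≤ κ} λ_α x^α`. -/
noncomputable def truncLE (κ : Fin n →₀ ℕ) (f : MvPolynomial (Fin n) ℝ) :
    MvPolynomial (Fin n) ℝ :=
  ∑ β ∈ f.support.filter (· ≤ κ), monomial β (f.coeff β)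

/-- Upper truncation `f_{≥κ} = Σ_{α ≥ κ} λ_α x^α`. -/
noncomputable def truncGE (κ : Fin n →₀ ℕ) (f : MvPolynomial (Fin n) ℝ) :
    MvPolynomial (Fin n) ℝ :=
  ∑ β ∈ f.support.filter (κ ≤ ·), monomial β (f.coeff β)

/-!
Truncating `f` to the exponents in a box `B` (`{γ ≤ κ}` or `{γ ≥ κ}`) keeps homogeneity and
non-negativity, and keeps M-convexity of the support because a box containing `a` and `b` also
contains the exchanged exponent `a - e_j + e_k`. Since `∂^α` and the Hessian only multiply
coefficients by positive constants, the Hessian of `∂^α f_B` is that of `∂^α f` with the entry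
`(i, j)` kept iff `α + e_i + e_j ∈ B`. A symmetric matrix has at most one positive eigenvalue iff
its quadratic form is nonpositive on some hyperplane `w^⊥`, and this survives the masking: for
`B = {γ ≤ κ}` the masked matrix is the principal submatrix on `{i | α + e_i ≤ κ}` with some
non-negative diagonal entries set to zero; for `B = {γ ≥ κ}` it is either unchanged (if `κ ≤ α`)
or supported on the row and column of an index `p` with `α p < κ p`, so it vanishes on `e_p^⊥`.
-/

section PartialDerivatives

variable {σ : Type*}

lemma exists_pos_coeff_pderiv_iterate (i : σ) (m : ℕ) (β : σ →₀ ℕ) :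
    ∃ c : ℝ, 0 < c ∧ ∀ g : MvPolynomial σ ℝ,
      coeff β ((pderiv i)^[m] g) = c * coeff (β + Finsupp.single i m) g := by
  induction m generalizing β with
  | zero => exact ⟨1, one_pos, fun g => by simp⟩
  | succ m ih =>
    obtain ⟨c, hc, hcoeff⟩ := ih β
    refine ⟨c * ((β + Finsupp.single i m) i + 1), by positivity, fun g => ?_⟩
    rw [Function.iterate_succ_apply, hcoeff, coeff_pderiv, add_assoc, ← Finsupp.single_add]
    ring

lemma exists_pos_coeff_foldr_pderiv_iterate (α : σ →₀ ℕ) (l : List σ) (β : σ →₀ ℕ) :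
    ∃ c : ℝ, 0 < c ∧ ∀ g : MvPolynomial σ ℝ,
      coeff β (l.foldr (fun i h => (pderiv i)^[α i] h) g) =
        c * coeff (β + (l.map fun i => Finsupp.single i (α i)).sum) g := by
  induction l generalizing β with
  | nil => exact ⟨1, one_pos, fun g => by simp⟩
  | cons i l ih =>
    obtain ⟨c₁, hc₁, hcoeff₁⟩ := exists_pos_coeff_pderiv_iterate i (α i) β
    obtain ⟨c₂, hc₂, hcoeff₂⟩ := ih (β + Finsupp.single i (α i))
    refine ⟨c₁ * c₂, mul_pos hc₁ hc₂, fun g => ?_⟩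
    rw [List.foldr_cons, hcoeff₁, hcoeff₂, List.map_cons, List.sum_cons, add_assoc, mul_assoc]

end PartialDerivatives

lemma exists_pos_coeff_pderivPow (α β : Fin n →₀ ℕ) :
    ∃ c : ℝ, 0 < c ∧ ∀ g : MvPolynomial (Fin n) ℝ,
      coeff β (pderivPow α g) = c * coeff (β + α) g := by
  simpa only [pderivPow, ← Fin.sum_univ_def, Finsupp.univ_sum_single] using
    exists_pos_coeff_foldr_pderiv_iterate α (List.finRange n) β

lemma hessian_apply (h : MvPolynomial (Fin n) ℝ) (i j : Fin n) :
    hessian h i j =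
      coeff (Finsupp.single i 1 + Finsupp.single j 1) h *
        ((Finsupp.single i 1 : Fin n →₀ ℕ) j + 1 : ℝ) := by
  rw [hessian, coeff_pderiv, coeff_pderiv, zero_add]
  simp

lemma hessian_isHermitian (h : MvPolynomial (Fin n) ℝ) : (hessian h).IsHermitian := by
  refine Matrix.IsHermitian.ext fun i j => ?_
  simp only [star_trivial, hessian_apply, add_comm (Finsupp.single i 1), Finsupp.single_apply,
    eq_comm]

lemma exists_pos_hessian_pderivPow (α : Fin n →₀ ℕ) (i j : Fin n) :
    ∃ c : ℝ, 0 < c ∧ ∀ g : MvPolynomial (Fin n) ℝ,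
      hessian (pderivPow α g) i j = c * coeff (α + Finsupp.single i 1 + Finsupp.single j 1) g := by
  obtain ⟨c, hc, hcoeff⟩ := exists_pos_coeff_pderivPow α (Finsupp.single i 1 + Finsupp.single j 1)
  refine ⟨c * ((Finsupp.single i 1 : Fin n →₀ ℕ) j + 1 : ℝ), by positivity, fun g => ?_⟩
  rw [hessian_apply, hcoeff, add_comm _ α, ← add_assoc]
  ring

lemma coeff_sum_filter_monomial (P : (Fin n →₀ ℕ) → Prop) [DecidablePred P]
    (f : MvPolynomial (Fin n) ℝ) (γ : Fin n →₀ ℕ) :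
    coeff γ (∑ β ∈ f.support.filter P, monomial β (coeff β f)) =
      if P γ then coeff γ f else 0 := by
  simp only [coeff_sum, coeff_monomial, Finset.sum_ite_eq', Finset.mem_filter, mem_support_iff]
  by_cases hγ : coeff γ f = 0 <;> simp [hγ]

lemma coeff_truncLE (κ : Fin n →₀ ℕ) (f : MvPolynomial (Fin n) ℝ) (γ : Fin n →₀ ℕ) :
    coeff γ (truncLE κ f) = if γ ≤ κ then coeff γ f else 0 :=
  coeff_sum_filter_monomial _ f γ

lemma coeff_truncGE (κ : Fin n →₀ ℕ) (f : MvPolynomial (Fin n) ℝ) (γ : Fin n →₀ ℕ) :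
    coeff γ (truncGE κ f) = if κ ≤ γ then coeff γ f else 0 :=
  coeff_sum_filter_monomial _ f γ

open Matrix

section QuadraticForms

variable {ι : Type*} [Fintype ι]

def IsNonposOnHyperplane (A : Matrix ι ι ℝ) : Prop :=
  ∃ w : ι → ℝ, ∀ v : ι → ℝ, w ⬝ᵥ v = 0 → v ⬝ᵥ A *ᵥ v ≤ 0

lemma dotProduct_mulVec_self (A : Matrix ι ι ℝ) (v : ι → ℝ) :
    v ⬝ᵥ A *ᵥ v = ∑ i, ∑ j, A i j * (v i * v j) := by
  simp only [dotProduct, mulVec, Finset.mul_sum]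
  exact Finset.sum_congr rfl fun i _ => Finset.sum_congr rfl fun j _ => by ring

lemma isNonposOnHyperplane_of_apply_eq_zero_of_ne [DecidableEq ι] {A : Matrix ι ι ℝ} (p : ι)
    (hA : ∀ i j, i ≠ p → j ≠ p → A i j = 0) : IsNonposOnHyperplane A := by
  refine ⟨Pi.single p 1, fun v hv => ?_⟩
  have hvp : v p = 0 := by simpa using hv
  rw [dotProduct_mulVec_self]
  refine (Finset.sum_eq_zero fun i _ => Finset.sum_eq_zero fun j _ => ?_).le
  by_cases hi : i = p
  · simp [hi, hvp]
  by_cases hj : j = p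
  · simp [hj, hvp]
  simp [hA i j hi hj]

lemma IsNonposOnHyperplane.of_le_compression {A A' : Matrix ι ι ℝ} (S : Set ι)
    (hA : IsNonposOnHyperplane A)
    (hsupp : ∀ i j, A' i j ≠ 0 → i ∈ S ∧ j ∈ S)
    (hoff : ∀ i ∈ S, ∀ j ∈ S, i ≠ j → A' i j = A i j) (hdiag : ∀ i ∈ S, A' i i ≤ A i i) :
    IsNonposOnHyperplane A' := by
  obtain ⟨w, hw⟩ := hA
  refine ⟨S.indicator w, fun v hv => ?_⟩
  have hwv : w ⬝ᵥ S.indicator v = 0 := by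
    rw [← hv]
    refine Finset.sum_congr rfl fun i _ => ?_
    by_cases hi : i ∈ S <;> simp [hi]
  refine le_trans ?_ (hw _ hwv)
  rw [dotProduct_mulVec_self, dotProduct_mulVec_self]
  refine Finset.sum_le_sum fun i _ => Finset.sum_le_sum fun j _ => ?_
  by_cases hS : i ∈ S ∧ j ∈ S
  swap
  · have hij : A' i j = 0 := by_contra fun h => hS (hsupp i j h)
    rcases not_and_or.1 hS with h | h <;> simp [hij, Set.indicator_of_notMem h]
  obtain ⟨hi, hj⟩ := hS
  rw [Set.indicator_of_mem hi, Set.indicator_of_mem hj]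
  rcases eq_or_ne i j with rfl | hne
  · exact mul_le_mul_of_nonneg_right (hdiag i hi) (mul_self_nonneg _)
  · rw [hoff i hi j hj hne]

lemma Matrix.IsHermitian.dotProduct_mulVec_self_eq_sum [DecidableEq ι] {A : Matrix ι ι ℝ}
    (hA : A.IsHermitian) (v : ι → ℝ) :
    v ⬝ᵥ A *ᵥ v = ∑ i, hA.eigenvalues i * (hA.eigenvectorBasis i ⬝ᵥ v) ^ 2 := by
  set b := hA.eigenvectorBasis
  have hAb : ∀ i, A *ᵥ ⇑(b i) = hA.eigenvalues i • ⇑(b i) := hA.mulVec_eigenvectorBasis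
  have hv : v = ∑ i, (b i ⬝ᵥ v) • ⇑(b i) := by
    have := congrArg (⇑) (b.sum_repr' (WithLp.toLp 2 v))
    simpa [EuclideanSpace.inner_eq_star_dotProduct, dotProduct_comm] using this.symm
  calc v ⬝ᵥ A *ᵥ v = v ⬝ᵥ A *ᵥ ∑ i, (b i ⬝ᵥ v) • ⇑(b i) := by rw [← hv]
    _ = _ := by
      simp only [mulVec_sum, mulVec_smul, hAb, dotProduct_sum,
        dotProduct_smul, smul_eq_mul]
      refine Finset.sum_congr rfl fun i _ => ?_
      rw [dotProduct_comm]
      ring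

lemma Matrix.IsHermitian.eigenvectorBasis_dotProduct [DecidableEq ι] {A : Matrix ι ι ℝ}
    (hA : A.IsHermitian) (i j : ι) :
    ⇑(hA.eigenvectorBasis i) ⬝ᵥ ⇑(hA.eigenvectorBasis j) = if i = j then 1 else 0 := by
  rw [← orthonormal_iff_ite.1 hA.eigenvectorBasis.orthonormal i j,
    EuclideanSpace.inner_eq_star_dotProduct, dotProduct_comm]
  rfl

end QuadraticForms

lemma exists_ne_zero_mul_add_mul_eq_zero {R : Type*} [CommRing R] [Nontrivial R] (x y : R) :
    ∃ a b : R, (a ≠ 0 ∨ b ≠ 0) ∧ a * x + b * y = 0 := by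
  by_cases hx : x = 0
  · exact ⟨1, 0, Or.inl one_ne_zero, by simp [hx]⟩
  · exact ⟨y, -x, Or.inr (neg_ne_zero.2 hx), by ring⟩

lemma atMostOnePos_of_isNonposOnHyperplane {m : ℕ} {A : Matrix (Fin m) (Fin m) ℝ}
    (h : IsNonposOnHyperplane A) : AtMostOnePos A := by
  intro hA
  by_contra! hcard
  obtain ⟨i, hi, j, hj, hij⟩ := Finset.one_lt_card.1 hcard
  simp only [Finset.mem_filter, Finset.mem_univ, true_and] at hi hj
  obtain ⟨w, hw⟩ := h
  set b := hA.eigenvectorBasis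
  have hAb : ∀ k, A *ᵥ ⇑(b k) = hA.eigenvalues k • ⇑(b k) := hA.mulVec_eigenvectorBasis
  have hb : ∀ k l, ⇑(b k) ⬝ᵥ ⇑(b l) = if k = l then 1 else 0 :=
    hA.eigenvectorBasis_dotProduct
  obtain ⟨x, y, hxy, hxyw⟩ := exists_ne_zero_mul_add_mul_eq_zero (w ⬝ᵥ b i) (w ⬝ᵥ b j)
  have hq := hw (x • ⇑(b i) + y • ⇑(b j)) (by simpa [dotProduct_add, dotProduct_smul] using hxyw)
  simp only [mulVec_add, mulVec_smul, hAb, add_dotProduct,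
    dotProduct_add, smul_dotProduct, dotProduct_smul, hb, if_neg hij, if_neg hij.symm,
    smul_eq_mul, if_true, mul_one, mul_zero, add_zero, zero_add] at hq
  rcases hxy with hx | hy
  · nlinarith [mul_pos hi (mul_self_pos.2 hx), mul_nonneg hj.le (mul_self_nonneg y)]
  · nlinarith [mul_pos hj (mul_self_pos.2 hy), mul_nonneg hi.le (mul_self_nonneg x)]

lemma IsNonposOnHyperplane.of_atMostOnePos {m : ℕ} {A : Matrix (Fin m) (Fin m) ℝ}
    (hA : A.IsHermitian) (h : AtMostOnePos A) : IsNonposOnHyperplane A := by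
  obtain ⟨w, hw⟩ : ∃ w : Fin m → ℝ, ∀ k, 0 < hA.eigenvalues k →
      ∀ v, w ⬝ᵥ v = 0 → ⇑(hA.eigenvectorBasis k) ⬝ᵥ v = 0 := by
    by_cases hpos : ∃ i, 0 < hA.eigenvalues i
    · obtain ⟨i, hi⟩ := hpos
      refine ⟨hA.eigenvectorBasis i, fun k hk v hv => ?_⟩
      rwa [Finset.card_le_one.1 (h hA) k (by simpa) i (by simpa)]
    · push Not at hpos
      exact ⟨0, fun k hk => absurd hk (hpos k).not_gt⟩
  refine ⟨w, fun v hv => ?_⟩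
  rw [hA.dotProduct_mulVec_self_eq_sum]
  refine Finset.sum_nonpos fun k _ => ?_
  rcases le_or_gt (hA.eigenvalues k) 0 with hk | hk
  · exact mul_nonpos_of_nonpos_of_nonneg hk (sq_nonneg _)
  · rw [hw k hk v hv]
    simp

section ExponentOrder

variable {σ : Type*} {α κ : σ →₀ ℕ}

lemma add_single_add_single_le {i j : σ} (hij : i ≠ j) (hi : α + Finsupp.single i 1 ≤ κ)
    (hj : α + Finsupp.single j 1 ≤ κ) : α + Finsupp.single i 1 + Finsupp.single j 1 ≤ κ := by
  classical
  rw [Finsupp.le_def] at *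
  intro k
  have hik := hi k
  have hjk := hj k
  simp only [Finsupp.add_apply, Finsupp.single_apply] at hik hjk ⊢
  split_ifs at hik hjk ⊢ <;> subst_vars <;> first | omega | contradiction

lemma eq_or_eq_of_le_add_single_add_single {p i j : σ} (hp : α p < κ p)
    (h : κ ≤ α + Finsupp.single i 1 + Finsupp.single j 1) : i = p ∨ j = p := by
  classical
  have hpp := Finsupp.le_def.1 h p
  simp only [Finsupp.add_apply, Finsupp.single_apply] at hpp
  split_ifs at hpp with hi hj <;> first | omega | tauto

lemma sub_single_add_single_le {a b : σ →₀ ℕ} {j k : σ} (ha : a ≤ κ) (hb : b ≤ κ)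
    (hk : a k < b k) : a - Finsupp.single j 1 + Finsupp.single k 1 ≤ κ := by
  classical
  rw [Finsupp.le_def] at *
  intro l
  have hal := ha l
  have hbk := hb k
  simp only [Finsupp.add_apply, Finsupp.tsub_apply, Finsupp.single_apply]
  split_ifs with hjl hkl <;> subst_vars <;> omega

lemma le_sub_single_add_single {a b : σ →₀ ℕ} {j k : σ} (ha : κ ≤ a) (hb : κ ≤ b)
    (hj : b j < a j) : κ ≤ a - Finsupp.single j 1 + Finsupp.single k 1 := by
  classical
  rw [Finsupp.le_def] at *
  intro l
  have hal := ha l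
  have hbj := hb j
  simp only [Finsupp.add_apply, Finsupp.tsub_apply, Finsupp.single_apply]
  split_ifs with hjl hkl <;> subst_vars <;> omega

end ExponentOrder

lemma isNonposOnHyperplane_mask_le (α κ : Fin n →₀ ℕ) {H : Matrix (Fin n) (Fin n) ℝ}
    (hdiag : ∀ i, 0 ≤ H i i) (hH : IsNonposOnHyperplane H) :
    IsNonposOnHyperplane (of fun i j =>
      if α + Finsupp.single i 1 + Finsupp.single j 1 ≤ κ then H i j else 0) := by
  refine hH.of_le_compression {i | α + Finsupp.single i 1 ≤ κ} (fun i j hij => ?_)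
    (fun i hi j hj hne => ?_) (fun i _ => ?_)
  · simp only [of_apply, ne_eq, ite_eq_right_iff, Classical.not_imp] at hij
    refine ⟨le_self_add.trans hij.1, ?_⟩
    calc α + Finsupp.single j 1 ≤ α + Finsupp.single j 1 + Finsupp.single i 1 := le_self_add
      _ = α + Finsupp.single i 1 + Finsupp.single j 1 := add_right_comm _ _ _
      _ ≤ κ := hij.1
  · simp [add_single_add_single_le hne hi hj]
  · simp only [of_apply]
    split_ifs
    exacts [le_rfl, hdiag i]

lemma isNonposOnHyperplane_mask_ge (α κ : Fin n →₀ ℕ) {H : Matrix (Fin n) (Fin n) ℝ}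
    (hH : IsNonposOnHyperplane H) :
    IsNonposOnHyperplane (of fun i j =>
      if κ ≤ α + Finsupp.single i 1 + Finsupp.single j 1 then H i j else 0) := by
  by_cases hκ : κ ≤ α
  · convert hH using 1
    ext i j
    simp [hκ.trans (le_self_add.trans le_self_add)]
  · obtain ⟨p, hp⟩ : ∃ p, α p < κ p := by simpa [Finsupp.le_def] using hκ
    refine isNonposOnHyperplane_of_apply_eq_zero_of_ne p fun i j hi hj => ?_
    simp only [of_apply, ite_eq_right_iff]
    exact fun h => ((eq_or_eq_of_le_add_single_add_single hp h).elim hi hj).elim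

section Masking

variable {P : (Fin n →₀ ℕ) → Prop} [DecidablePred P] {f g : MvPolynomial (Fin n) ℝ}

lemma hessian_pderivPow_of_coeff_eq_ite (hg : ∀ γ, coeff γ g = if P γ then coeff γ f else 0)
    (α : Fin n →₀ ℕ) :
    hessian (pderivPow α g) = of fun i j =>
      if P (α + Finsupp.single i 1 + Finsupp.single j 1) then hessian (pderivPow α f) i j
      else 0 := by
  ext i j
  obtain ⟨c, -, hcoeff⟩ := exists_pos_hessian_pderivPow α i j
  simp only [hcoeff, hg, of_apply, mul_ite, mul_zero]

theorem Lorentzian.of_coeff_eq_ite {d : ℕ} (hf : Lorentzian d f)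
    (hg : ∀ γ, coeff γ g = if P γ then coeff γ f else 0)
    (hexch : ∀ (a b : Fin n →₀ ℕ) (j k : Fin n), P a → P b → b j < a j → a k < b k →
      P (a - Finsupp.single j 1 + Finsupp.single k 1))
    (hmask : ∀ (α : Fin n →₀ ℕ) (H : Matrix (Fin n) (Fin n) ℝ), (∀ i, 0 ≤ H i i) →
      IsNonposOnHyperplane H → IsNonposOnHyperplane (of fun i j =>
        if P (α + Finsupp.single i 1 + Finsupp.single j 1) then H i j else 0)) :
    Lorentzian d g := by
  obtain ⟨hhom, hnonneg, hhigh⟩ := hf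
  have hsupp : ∀ γ, coeff γ g ≠ 0 → P γ ∧ coeff γ f ≠ 0 := by
    intro γ
    rw [hg]
    split_ifs with hγ <;> simp [hγ]
  refine ⟨fun γ hγ => hhom (hsupp γ hγ).2, fun γ => ?_, fun hd => ⟨?_, fun α hα => ?_⟩⟩
  · rw [hg]
    split_ifs
    exacts [hnonneg γ, le_rfl]
  · intro a ha b hb j hj
    obtain ⟨hPa, ha⟩ := hsupp a ha
    obtain ⟨hPb, hb⟩ := hsupp b hb
    obtain ⟨k, hk, hmem⟩ := (hhigh hd).1 a ha b hb j hj
    refine ⟨k, hk, ?_⟩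
    simpa [hg, hexch a b j k hPa hPb hj hk] using hmem
  · have hdiag : ∀ i, 0 ≤ hessian (pderivPow α f) i i := fun i => by
      obtain ⟨c, hc, hcoeff⟩ := exists_pos_hessian_pderivPow α i i
      exact hcoeff f ▸ mul_nonneg hc.le (hnonneg _)
    rw [hessian_pderivPow_of_coeff_eq_ite hg]
    exact atMostOnePos_of_isNonposOnHyperplane (hmask α _ hdiag
      (.of_atMostOnePos (hessian_isHermitian _) ((hhigh hd).2 α hα)))

end Masking

lemma lorentzian_truncLE {d : ℕ} {f : MvPolynomial (Fin n) ℝ} (hf : Lorentzian d f)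
    (κ : Fin n →₀ ℕ) : Lorentzian d (truncLE κ f) :=
  hf.of_coeff_eq_ite (coeff_truncLE κ f)
    (fun _ _ _ _ ha hb _ hk => sub_single_add_single_le ha hb hk)
    (fun α _ hdiag hH => isNonposOnHyperplane_mask_le α κ hdiag hH)

lemma lorentzian_truncGE {d : ℕ} {f : MvPolynomial (Fin n) ℝ} (hf : Lorentzian d f)
    (κ : Fin n →₀ ℕ) : Lorentzian d (truncGE κ f) :=
  hf.of_coeff_eq_ite (coeff_truncGE κ f)
    (fun _ _ _ _ ha hb hj _ => le_sub_single_add_single ha hb hj)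
    (fun α _ _ hH => isNonposOnHyperplane_mask_ge α κ hH)

/-- Truncations of Lorentzian polynomials are Lorentzian. -/
theorem stmt_14 (f g : MvPolynomial (Fin n) ℝ) (d e : ℕ)
    (hf : Lorentzian d f) (hg : Lorentzian e g) (κ : Fin n →₀ ℕ) :
    Lorentzian d (truncLE κ f) ∧ Lorentzian d (truncGE κ f) ∧
    Lorentzian e (truncLE κ g) ∧ Lorentzian e (truncGE κ g) :=
  ⟨lorentzian_truncLE hf κ, lorentzian_truncGE hf κ,
    lorentzian_truncLE hg κ, lorentzian_truncGE hg κ⟩
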